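/- Let Γ > 0, let n ≥ 1 and 0 ≤ k < 2^(n−1), and let t ∈ [0,1]. Writing Φ^α_{n,k} for the basis element with parameter α > 0, one has lim_{α → 0⁺} Φ^α_{n,k}(t) = Ψ_{n,k}(t); i.e., as the drift parameter vanishes the Ornstein–Uhlenbeck basis elements converge pointwise to the Haar-derived basis elements of the Wiener process. -/

import Mathlib

/-!
Dividing numerator and denominator by `√α`, for `α > 0`
`√(Γ/α) sinh(α s) / √(sinh(α h)) = √Γ · (sinh(α s)/α) / √(sinh(α h)/α)`,
and `sinh(α s)/α → s` is the derivative of `α ↦ sinh(α s)` at `0`. On each half of the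
support this gives the limit `√Γ · s / √(2^(1-n)) = √Γ · 2^((n-1)/2) · s`; off the support both
functions vanish.
-/

/-- The Haar-like basis element `Φ^α_{n,k}` (for `n ≥ 1`) of the Ornstein–Uhlenbeck
process with diffusion coefficient `Γ` and drift parameter `α`. -/
noncomputable def PhiA (Γ α : ℝ) (n k : ℕ) (t : ℝ) : ℝ :=
  if 2 * (k : ℝ) * 2 ^ (-(n : ℤ)) ≤ t ∧ t ≤ (2 * (k : ℝ) + 1) * 2 ^ (-(n : ℤ)) then
    Real.sqrt (Γ / α) * Real.sinh (α * (t - 2 * (k : ℝ) * 2 ^ (-(n : ℤ)))) /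
      Real.sqrt (Real.sinh (α * 2 ^ (-(n : ℤ) + 1)))
  else if (2 * (k : ℝ) + 1) * 2 ^ (-(n : ℤ)) ≤ t ∧ t ≤ 2 * ((k : ℝ) + 1) * 2 ^ (-(n : ℤ)) then
    Real.sqrt (Γ / α) * Real.sinh (α * (2 * ((k : ℝ) + 1) * 2 ^ (-(n : ℤ)) - t)) /
      Real.sqrt (Real.sinh (α * 2 ^ (-(n : ℤ) + 1)))
  else 0

/-- The Haar-derived basis element `Ψ_{n,k}` (for `n ≥ 1`) of the Wiener process with
diffusion coefficient `Γ`. -/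
noncomputable def Psi (Γ : ℝ) (n k : ℕ) (t : ℝ) : ℝ :=
  if 2 * (k : ℝ) * 2 ^ (-(n : ℤ)) ≤ t ∧ t ≤ (2 * (k : ℝ) + 1) * 2 ^ (-(n : ℤ)) then
    Real.sqrt Γ * 2 ^ (((n : ℝ) - 1) / 2) * (t - 2 * (k : ℝ) * 2 ^ (-(n : ℤ)))
  else if (2 * (k : ℝ) + 1) * 2 ^ (-(n : ℤ)) ≤ t ∧ t ≤ 2 * ((k : ℝ) + 1) * 2 ^ (-(n : ℤ)) then
    Real.sqrt Γ * 2 ^ (((n : ℝ) - 1) / 2) * (2 * ((k : ℝ) + 1) * 2 ^ (-(n : ℤ)) - t)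
  else 0

open Filter Topology Real

lemma tendsto_sinh_mul_div_self (s : ℝ) :
    Tendsto (fun α : ℝ => sinh (α * s) / α) (𝓝[≠] 0) (𝓝 s) := by
  have hderiv : HasDerivAt (fun α : ℝ => sinh (α * s)) s 0 := by
    simpa using ((hasDerivAt_id (0 : ℝ)).mul_const s).sinh
  rw [hasDerivAt_iff_tendsto_slope] at hderiv
  refine hderiv.congr fun α => ?_
  simp [slope_def_field]

lemma tendsto_sqrt_div_mul_sinh_div_sqrt_sinh (Γ s : ℝ) {h : ℝ} (hh : 0 < h) :
    Tendsto (fun α : ℝ => √(Γ / α) * sinh (α * s) / √(sinh (α * h))) (𝓝[>] 0)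
      (𝓝 (√Γ * s / √h)) := by
  have hlim : Tendsto (fun α : ℝ => √Γ * (sinh (α * s) / α) / √(sinh (α * h) / α)) (𝓝[>] 0)
      (𝓝 (√Γ * s / √h)) := by
    have hle : 𝓝[>] (0 : ℝ) ≤ 𝓝[≠] 0 := nhdsWithin_mono _ fun _ hx => ne_of_gt hx
    exact ((tendsto_sinh_mul_div_self s).const_mul √Γ).div
      (tendsto_sinh_mul_div_self h).sqrt (sqrt_pos.2 hh).ne' |>.mono_left hle
  refine hlim.congr' ?_
  filter_upwards [self_mem_nhdsWithin] with α (hα : 0 < α)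
  rw [sqrt_div' _ hα.le, sqrt_div' _ hα.le]
  field_simp
  rw [sq_sqrt hα.le]
  ring

lemma two_rpow_half_sub_one_eq_inv_sqrt (n : ℕ) :
    (2 : ℝ) ^ (((n : ℝ) - 1) / 2) = (√((2 : ℝ) ^ (-(n : ℤ) + 1)))⁻¹ := by
  rw [sqrt_eq_rpow, ← rpow_intCast, ← rpow_mul zero_le_two, ← rpow_neg zero_le_two]
  push_cast
  ring_nf

theorem phi_tendsto_psi_general (Γ : ℝ) (n k : ℕ) (t : ℝ) :
    Filter.Tendsto (fun α : ℝ => PhiA Γ α n k t) (nhdsWithin 0 (Set.Ioi 0))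
      (nhds (Psi Γ n k t)) := by
  have hlim (s : ℝ) : Tendsto
      (fun α : ℝ => √(Γ / α) * sinh (α * s) / √(sinh (α * 2 ^ (-(n : ℤ) + 1)))) (𝓝[>] 0)
      (𝓝 (√Γ * 2 ^ (((n : ℝ) - 1) / 2) * s)) := by
    rw [two_rpow_half_sub_one_eq_inv_sqrt, mul_right_comm, ← div_eq_mul_inv]
    exact tendsto_sqrt_div_mul_sinh_div_sqrt_sinh Γ s (by positivity)
  unfold PhiA Psi
  split_ifs
  · exact hlim _
  · exact hlim _
  · exact tendsto_const_nhds

/-- As the drift parameter vanishes, the Ornstein–Uhlenbeck basis elements converge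
pointwise to the Haar-derived basis elements of the Wiener process:
`lim_{α → 0⁺} Φ^α_{n,k}(t) = Ψ_{n,k}(t)`. -/
theorem phi_tendsto_psi (Γ : ℝ) (hΓ : 0 < Γ) (n k : ℕ) (hn : 1 ≤ n)
    (hk : k < 2 ^ (n - 1)) (t : ℝ) (ht : t ∈ Set.Icc (0 : ℝ) 1) :
    Filter.Tendsto (fun α : ℝ => PhiA Γ α n k t) (nhdsWithin 0 (Set.Ioi 0))
      (nhds (Psi Γ n k t)) :=
  phi_tendsto_psi_general Γ n k t
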